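/- arXiv:2003.07035 — 4 statements merged into one kernel-verified Lean document; each statement's English description precedes it below -/
import Mathlib

section
/- Let (R, I) be a graded pair and M a finitely generated graded R-module. Then each g_n(M_R,I) is a compactly supported continuous function, and there exists a constant m̃ > 0, independent of n, such that supp g_n(M_R,I) ⊆ [0, m̃] and supp f_n(M_R,I) ⊆ [0, m̃] for all n ≥ 1. More precisely, if I is generated by s homogeneous elements, M is generated by homogeneous elements of degrees at most n_ν, R is generated as a k-algebra by homogeneous elements of degrees at most m_μ, and l is an integer with J^l ⊆ I for the irrelevant ideal J = ⊕_{m>0} R_m, then (M/I^{[q]}M)_m = 0 for all m ≥ n_ν + m_μ·l·s·q. -/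
open Filter MeasureTheory Topology

noncomputable section

/-- The `q`-th Frobenius bracket power `I^{[q]}` of an ideal `I`. -/
def Ideal.frobeniusPow {R : Type*} [CommSemiring R] (I : Ideal R) (q : ℕ) : Ideal R :=
  Ideal.span ((· ^ q) '' (I : Set R))

/-- `dim_k` of the degree-`j` graded piece of `M ⧸ N`, for a graded `k`-module `M`
with grading `ℳ` and a `k`-submodule `N ≤ M`. -/
def gradedPieceLen (k : Type*) [Field k] {M : Type*} [AddCommGroup M] [Module k M]
    (ℳ : ℕ → Submodule k M) (N : Submodule k M) (j : ℕ) : ℕ :=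
  Module.finrank k (↥(ℳ j) ⧸ (N.comap (ℳ j).subtype))

/-- The step function `f_n(M_R, I)` of a graded pair, for a graded module `M`. -/
def hkStep (k : Type*) [Field k] {R M : Type*} [CommRing R] [AddCommGroup M] [Module R M]
    [Module k M] [SMul k R] [IsScalarTower k R M]
    (ℳ : ℕ → Submodule k M) (I : Ideal R) (d n₀ p n : ℕ) (x : ℝ) : ℝ :=
  (∑ i ∈ Finset.range n₀,
      (gradedPieceLen k ℳ ((I.frobeniusPow (p ^ n) • (⊤ : Submodule R M)).restrictScalars k)
        (⌊x * (p ^ n : ℕ)⌋₊ * n₀ + i) : ℝ)) / ((p : ℝ) ^ n) ^ (d - 1)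

/-- The interpolated function `g_n(M_R, I)` of a graded pair. -/
def hkStepG (k : Type*) [Field k] {R M : Type*} [CommRing R] [AddCommGroup M] [Module R M]
    [Module k M] [SMul k R] [IsScalarTower k R M]
    (ℳ : ℕ → Submodule k M) (I : Ideal R) (d n₀ p n : ℕ) (x : ℝ) : ℝ :=
  (1 - (x * (p ^ n : ℕ) - ⌊x * (p ^ n : ℕ)⌋₊)) *
      hkStep k ℳ I d n₀ p n ((⌊x * (p ^ n : ℕ)⌋₊ : ℝ) / (p ^ n : ℕ))
    + (x * (p ^ n : ℕ) - ⌊x * (p ^ n : ℕ)⌋₊) *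
      hkStep k ℳ I d n₀ p n ((⌊x * (p ^ n : ℕ)⌋₊ + 1 : ℝ) / (p ^ n : ℕ))

/-!
A homogeneous element of `R` of degree at least `mμ * c` is a `k`-combination of monomials in the
algebra generators, each of which has at least `c` factors of positive degree; hence `R_j ⊆ J^c`.
For `j ≥ mμ * l * s * q` this gives `R_j ⊆ J^(l s q) ⊆ I^(s q) ⊆ I^[q]`, the last inclusion because
a product of `s q` of the `s` generators of `I` contains one of them at least `q` times. Writing an
element of `M_m` through the generators of `M` then shows `M_m ⊆ I^[q] M` for
`m ≥ nν + mμ * l * s * q`. The degenerate cases `s = 0` and `mμ = 0` would force `R = k`,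
which has dimension `0`.

The step function `f_n` is constant on the intervals `[a/q, (a+1)/q)` and `g_n` is the piecewise
linear interpolation of its values there, so `g_n` is continuous and both vanish beyond
`nν + mμ * l * s + 1`.
-/

section PiecewiseLinear

open Set in
theorem continuous_piecewise_natFloor {X : Type*} [TopologicalSpace X] (A : ℕ → ℝ → X)
    (hA : ∀ m, Continuous (A m)) (hglue : ∀ m : ℕ, A m (m + 1) = A (m + 1) (m + 1)) :
    Continuous fun y => A ⌊y⌋₊ y := by
  refine LocallyFinite.continuous (f := fun n : ℤ => Icc (n : ℝ) (n + 1))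
    (locallyFinite_Icc_of_tendsto tendsto_intCast_atTop_atTop
      (tendsto_atBot_add_const_right _ _ (tendsto_intCast_atBot_iff.2 tendsto_id)))
    (iUnion_Icc_intCast ℝ) (fun _ => isClosed_Icc)
    fun n => (hA n.toNat).continuousOn.congr fun y hy => ?_
  -- on `[n, n + 1]` the function is `A n.toNat`, at the right endpoint thanks to `hglue`
  rcases hy.2.lt_or_eq with hlt | rfl
  · rw [← Int.floor_toNat, Int.floor_eq_iff.mpr ⟨hy.1, hlt⟩]
  · rcases le_or_gt 0 n with hn | hn
    · lift n to ℕ using hn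
      have := hglue n
      simp only [Int.cast_natCast, Int.toNat_natCast] at this ⊢
      rw [← Nat.cast_succ, Nat.floor_natCast, Nat.cast_succ, this]
    · have hn' : (n : ℝ) + 1 ≤ 0 := by exact_mod_cast hn
      rw [Int.toNat_of_nonpos hn.le, Nat.floor_eq_zero.mpr (by linarith)]

/-- Since `⌊y⌋₊ = 0` for `y < 0`, the first piece extends linearly to negative arguments. -/
def piecewiseLinear (G : ℕ → ℝ) (y : ℝ) : ℝ :=
  (1 - (y - ⌊y⌋₊)) * G ⌊y⌋₊ + (y - ⌊y⌋₊) * G (⌊y⌋₊ + 1)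

theorem continuous_piecewiseLinear (G : ℕ → ℝ) : Continuous (piecewiseLinear G) :=
  continuous_piecewise_natFloor (fun m y => (1 - (y - m)) * G m + (y - m) * G (m + 1))
    (fun _ => by fun_prop) fun m => by push_cast; ring

theorem piecewiseLinear_eq_zero {G : ℕ → ℝ} {y : ℝ} (hG : ∀ a, ⌊y⌋₊ ≤ a → G a = 0) :
    piecewiseLinear G y = 0 := by
  simp [piecewiseLinear, hG]

end PiecewiseLinear

theorem Ideal.span_image_pow_card_mul_le {R ι : Type*} [CommSemiring R] (g : ι → R) (q : ℕ)
    {S : Finset ι} (hS : S.Nonempty) :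
    Ideal.span (g '' S) ^ (S.card * q) ≤ Ideal.span ((· ^ q) '' (g '' S)) := by
  induction hS using Finset.Nonempty.cons_induction with
  | singleton a => simp [Ideal.span_singleton_pow]
  | cons a S ha hS ih =>
    rw [Finset.coe_cons, Set.image_insert_eq, Set.image_insert_eq, Ideal.span_insert,
      Ideal.span_insert, Finset.card_cons, add_mul, one_mul, add_comm]
    exact Ideal.sup_pow_add_le_pow_sup_pow.trans
      (sup_le_sup (Ideal.span_singleton_pow _ _).le ih)

theorem Ideal.span_range_pow_le_frobeniusPow {R ι : Type*} [CommSemiring R] [Fintype ι]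
    [Nonempty ι] (g : ι → R) (q : ℕ) :
    Ideal.span (Set.range g) ^ (Fintype.card ι * q) ≤
      (Ideal.span (Set.range g)).frobeniusPow q := by
  have h := Ideal.span_image_pow_card_mul_le g q Finset.univ_nonempty
  rw [Finset.coe_univ, Set.image_univ, Finset.card_univ] at h
  exact h.trans (Ideal.span_mono (Set.image_mono Ideal.subset_span))

theorem DirectSum.decompose_mem_span_inter {k ι M : Type*} [Semiring k] [DecidableEq ι]
    [AddCommMonoid M] [Module k M] (ℳ : ι → Submodule k M) [DirectSum.Decomposition ℳ]
    {S : Set M} (hS : ∀ x ∈ S, ∃ i, x ∈ ℳ i) {x : M} (hx : x ∈ Submodule.span k S) (j : ι) :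
    (DirectSum.decompose ℳ x j : M) ∈ Submodule.span k (S ∩ ℳ j) := by
  induction hx using Submodule.span_induction with
  | mem y hy =>
    obtain ⟨i, hi⟩ := hS y hy
    by_cases hij : i = j
    · subst hij
      rw [DirectSum.decompose_of_mem_same ℳ hi]
      exact Submodule.subset_span ⟨hy, hi⟩
    · rw [DirectSum.decompose_of_mem_ne ℳ hi hij]
      exact zero_mem _
  | zero => simp
  | add y z _ _ hy hz =>
    rw [DirectSum.decompose_add, DirectSum.add_apply, Submodule.coe_add]
    exact add_mem hy hz
  | smul c y _ hy =>
    rw [DirectSum.decompose_smul, DFinsupp.smul_apply, Submodule.coe_smul]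
    exact Submodule.smul_mem _ c hy

theorem DirectSum.grade_le_of_span_eq_top {k ι M : Type*} [Semiring k] [DecidableEq ι]
    [AddCommMonoid M] [Module k M] (ℳ : ι → Submodule k M) [DirectSum.Decomposition ℳ]
    {S : Set M} (hS : ∀ x ∈ S, ∃ i, x ∈ ℳ i) (hspan : Submodule.span k S = ⊤)
    {P : Submodule k M} {j : ι} (hP : ∀ x ∈ S, x ∈ ℳ j → x ∈ P) : ℳ j ≤ P := by
  intro x hx
  have h := DirectSum.decompose_mem_span_inter ℳ hS (hspan ▸ Submodule.mem_top : x ∈ _) j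
  rw [DirectSum.decompose_of_mem_same ℳ hx] at h
  exact Submodule.span_le.mpr (fun y hy => hP y hy.1 hy.2) h

theorem algebraMap_surjective_of_forall_mem_grade_zero {k R : Type*} [CommSemiring k]
    [Semiring R] [Algebra k R] {𝒜 : ℕ → Submodule k R} (h𝒜0 : 𝒜 0 ≤ Submodule.span k {1})
    (h : ∀ x : R, x ∈ 𝒜 0) : Function.Surjective (algebraMap k R) := fun x => by
  obtain ⟨c, hc⟩ := Submodule.mem_span_singleton.mp (h𝒜0 (h x))
  exact ⟨c, by rw [Algebra.algebraMap_eq_smul_one, hc]⟩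

section Graded

variable {k R : Type*} [CommSemiring k] [CommRing R] [Algebra k R]
  (𝒜 : ℕ → Submodule k R) [GradedAlgebra 𝒜]

open HomogeneousIdeal

theorem exists_mem_irrelevant_pow_of_mem_closure {ι : Type*} {mμ : ℕ} {gR : ι → R}
    (hgR : ∀ i, ∃ e ≤ mμ, gR i ∈ 𝒜 e) {w : R} (hw : w ∈ Submonoid.closure (Set.range gR)) :
    ∃ e c, e ≤ mμ * c ∧ w ∈ 𝒜 e ∧ w ∈ (irrelevant 𝒜).toIdeal ^ c := by
  induction hw using Submonoid.closure_induction with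
  | mem x hx =>
    obtain ⟨i, rfl⟩ := hx
    obtain ⟨e, he, hxe⟩ := hgR i
    rcases Nat.eq_zero_or_pos e with rfl | he0
    · exact ⟨0, 0, le_rfl, hxe, by simp⟩
    · exact ⟨e, 1, by omega, hxe, by simpa using mem_irrelevant_of_mem 𝒜 he0 hxe⟩
  | one => exact ⟨0, 0, le_rfl, SetLike.GradedOne.one_mem, by simp⟩
  | mul x y _ _ hx hy =>
    obtain ⟨e₁, c₁, hc₁, hx𝒜, hxJ⟩ := hx
    obtain ⟨e₂, c₂, hc₂, hy𝒜, hyJ⟩ := hy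
    exact ⟨e₁ + e₂, c₁ + c₂, by rw [mul_add]; omega, SetLike.mul_mem_graded hx𝒜 hy𝒜,
      pow_add (irrelevant 𝒜).toIdeal c₁ c₂ ▸ Ideal.mul_mem_mul hxJ hyJ⟩

theorem grade_le_irrelevant_pow {ι : Type*} {mμ : ℕ} (hmμ : 0 < mμ) {gR : ι → R}
    (hgRhom : ∀ i, ∃ e ≤ mμ, gR i ∈ 𝒜 e) (hgR : Algebra.adjoin k (Set.range gR) = ⊤)
    {c j : ℕ} (hcj : mμ * c ≤ j) :
    𝒜 j ≤ ((irrelevant 𝒜).toIdeal ^ c).restrictScalars k := by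
  refine DirectSum.grade_le_of_span_eq_top 𝒜 (S := Submonoid.closure (Set.range gR))
    (fun w hw => ?_) ?_ fun w hw hwj => ?_
  · obtain ⟨e, -, -, he, -⟩ := exists_mem_irrelevant_pow_of_mem_closure 𝒜 hgRhom hw
    exact ⟨e, he⟩
  · rw [← Algebra.adjoin_eq_span, hgR, Algebra.top_toSubmodule]
  · obtain ⟨e, c', hec', hwe, hwJ⟩ := exists_mem_irrelevant_pow_of_mem_closure 𝒜 hgRhom hw
    rcases eq_or_ne w 0 with rfl | hw0
    · exact zero_mem _
    obtain rfl := DirectSum.degree_eq_of_mem_mem 𝒜 hwe hwj hw0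
    exact Ideal.pow_le_pow_right (Nat.le_of_mul_le_mul_left (hcj.trans hec') hmμ) hwJ

theorem forall_mem_grade_zero_of_irrelevant_eq_bot (h : (irrelevant 𝒜).toIdeal = ⊥) (x : R) :
    x ∈ 𝒜 0 := by
  induction x using DirectSum.Decomposition.inductionOn 𝒜 with
  | zero => exact zero_mem _
  | @homogeneous i x =>
    rcases Nat.eq_zero_or_pos i with rfl | hi
    · exact x.2
    · have hx : (x : R) ∈ (irrelevant 𝒜).toIdeal := mem_irrelevant_of_mem 𝒜 hi x.2
      rw [h, Ideal.mem_bot] at hx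
      exact hx ▸ zero_mem _
  | add x y hx hy => exact add_mem hx hy

theorem forall_mem_grade_zero_of_adjoin_eq_top {ι : Type*} {gR : ι → R}
    (hgR : Algebra.adjoin k (Set.range gR) = ⊤) (h : ∀ i, gR i ∈ 𝒜 0) (x : R) : x ∈ 𝒜 0 :=
  (Algebra.adjoin_le (s := Set.range gR) (S := SetLike.GradeZero.subalgebra 𝒜)
    (Set.range_subset_iff.mpr h)) (hgR ▸ Algebra.mem_top)

theorem grade_le_frobeniusPow {ι κ : Type*} [Fintype κ] [Nonempty κ] {mμ : ℕ} (hmμ : 0 < mμ)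
    {gR : ι → R} (hgRhom : ∀ i, ∃ e ≤ mμ, gR i ∈ 𝒜 e) (hgR : Algebra.adjoin k (Set.range gR) = ⊤)
    {gI : κ → R} {l : ℕ} (hl : (irrelevant 𝒜).toIdeal ^ l ≤ Ideal.span (Set.range gI))
    (q : ℕ) {j : ℕ} (hj : mμ * l * Fintype.card κ * q ≤ j) :
    𝒜 j ≤ ((Ideal.span (Set.range gI)).frobeniusPow q).restrictScalars k := by
  refine (grade_le_irrelevant_pow 𝒜 hmμ hgRhom hgR (c := l * (Fintype.card κ * q))
    (by rwa [← mul_assoc, ← mul_assoc])).trans (Submodule.restrictScalars_mono k ?_)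
  calc (irrelevant 𝒜).toIdeal ^ (l * (Fintype.card κ * q))
      = ((irrelevant 𝒜).toIdeal ^ l) ^ (Fintype.card κ * q) := pow_mul _ _ _
    _ ≤ Ideal.span (Set.range gI) ^ (Fintype.card κ * q) := Ideal.pow_right_mono hl _
    _ ≤ _ := Ideal.span_range_pow_le_frobeniusPow gI q

open scoped Pointwise in
theorem grade_le_smul_top {ι M : Type*} [AddCommGroup M] [Module R M] [Module k M]
    [IsScalarTower k R M] (ℳ : ℕ → Submodule k M) [DirectSum.Decomposition ℳ]
    [SetLike.GradedSMul 𝒜 ℳ] {K : Ideal R} {N nν : ℕ} (hK : ∀ j, N ≤ j → 𝒜 j ≤ K.restrictScalars k)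
    {gM : ι → M} (hgMhom : ∀ i, ∃ e ≤ nν, gM i ∈ ℳ e)
    (hgM : Submodule.span R (Set.range gM) = ⊤) {m : ℕ} (hm : N + nν ≤ m) :
    ℳ m ≤ (K • (⊤ : Submodule R M)).restrictScalars k := by
  have hspan𝒜 : Submodule.span k (⋃ j, (𝒜 j : Set R)) = ⊤ := by
    rw [← Submodule.iSup_eq_span, (DirectSum.Decomposition.isInternal 𝒜).submodule_iSup_eq_top]
  refine DirectSum.grade_le_of_span_eq_top ℳ (S := (⋃ j, (𝒜 j : Set R)) • Set.range gM) ?_ ?_ ?_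
  · rintro _ ⟨w, hw, _, ⟨i, rfl⟩, rfl⟩
    obtain ⟨a, hwa⟩ := Set.mem_iUnion.mp hw
    obtain ⟨e, -, hgi⟩ := hgMhom i
    exact ⟨a + e, (SetLike.GradedSMul.smul_mem hwa hgi : w • gM i ∈ ℳ (a + e))⟩
  · rw [Submodule.span_smul_of_span_eq_top hspan𝒜, hgM, Submodule.restrictScalars_top]
  · rintro _ ⟨w, hw, _, ⟨i, rfl⟩, rfl⟩ hwm
    change w • gM i ∈ ℳ m at hwm
    change w • gM i ∈ K • (⊤ : Submodule R M)
    obtain ⟨a, hwa⟩ := Set.mem_iUnion.mp hw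
    obtain ⟨e, he, hgi⟩ := hgMhom i
    rcases eq_or_ne (w • gM i) 0 with h0 | h0
    · rw [h0]; exact zero_mem _
    have hwg : w • gM i ∈ ℳ (a + e) := SetLike.GradedSMul.smul_mem hwa hgi
    have hdeg : a + e = m := DirectSum.degree_eq_of_mem_mem ℳ hwg hwm h0
    exact Submodule.smul_mem_smul (hK a (by omega) hwa) Submodule.mem_top

end Graded

section StepFunction

variable (k : Type*) [Field k] {R M : Type*} [CommRing R] [AddCommGroup M] [Module R M]
  [Module k M] [SMul k R] [IsScalarTower k R M] (ℳ : ℕ → Submodule k M) (I : Ideal R)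
  (d n₀ p n : ℕ)

theorem gradedPieceLen_eq_zero {N : Submodule k M} {j : ℕ} (h : ℳ j ≤ N) :
    gradedPieceLen k ℳ N j = 0 := by
  rw [gradedPieceLen, Submodule.comap_subtype_eq_top.mpr h]
  exact Module.finrank_zero_of_subsingleton

/-- The value of `f_n` on `[a/q, (a+1)/q)`. -/
def hkStepSeq (a : ℕ) : ℝ :=
  (∑ i ∈ Finset.range n₀,
      (gradedPieceLen k ℳ ((I.frobeniusPow (p ^ n) • (⊤ : Submodule R M)).restrictScalars k)
        (a * n₀ + i) : ℝ)) / ((p : ℝ) ^ n) ^ (d - 1)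

theorem hkStep_eq_hkStepSeq (x : ℝ) :
    hkStep k ℳ I d n₀ p n x = hkStepSeq k ℳ I d n₀ p n ⌊x * (p ^ n : ℕ)⌋₊ :=
  rfl

theorem hkStepG_eq_piecewiseLinear (hp : p ≠ 0) :
    hkStepG k ℳ I d n₀ p n =
      fun x => piecewiseLinear (hkStepSeq k ℳ I d n₀ p n) (x * (p ^ n : ℕ)) := by
  have hq : ((p ^ n : ℕ) : ℝ) ≠ 0 := by positivity
  funext x
  simp only [hkStepG, piecewiseLinear, hkStep_eq_hkStepSeq, div_mul_cancel₀ _ hq,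
    ← Nat.cast_succ, Nat.floor_natCast]

theorem hkStepSeq_eq_zero {N a : ℕ}
    (hN : ∀ m, N ≤ m → ℳ m ≤ (I.frobeniusPow (p ^ n) • (⊤ : Submodule R M)).restrictScalars k)
    (ha : N ≤ a) : hkStepSeq k ℳ I d n₀ p n a = 0 := by
  refine div_eq_zero_iff.mpr (Or.inl (Finset.sum_eq_zero fun i hi => ?_))
  have hn₀ : 0 < n₀ := Nat.zero_lt_of_lt (Finset.mem_range.mp hi)
  rw [gradedPieceLen_eq_zero k ℳ (hN _ ?_), Nat.cast_zero]
  exact ha.trans ((Nat.le_mul_of_pos_right a hn₀).trans (Nat.le_add_right _ _))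

theorem continuous_hkStepG (hp : p ≠ 0) : Continuous (hkStepG k ℳ I d n₀ p n) := by
  rw [hkStepG_eq_piecewiseLinear k ℳ I d n₀ p n hp]
  exact (continuous_piecewiseLinear _).comp (continuous_mul_const _)

theorem hkStep_eq_zero {N : ℕ}
    (hN : ∀ m, N ≤ m → ℳ m ≤ (I.frobeniusPow (p ^ n) • (⊤ : Submodule R M)).restrictScalars k)
    {x : ℝ} (hx : N ≤ ⌊x * (p ^ n : ℕ)⌋₊) : hkStep k ℳ I d n₀ p n x = 0 :=
  hkStepSeq_eq_zero k ℳ I d n₀ p n hN hx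

theorem hkStepG_eq_zero (hp : p ≠ 0) {N : ℕ}
    (hN : ∀ m, N ≤ m → ℳ m ≤ (I.frobeniusPow (p ^ n) • (⊤ : Submodule R M)).restrictScalars k)
    {x : ℝ} (hx : N ≤ ⌊x * (p ^ n : ℕ)⌋₊) : hkStepG k ℳ I d n₀ p n x = 0 := by
  rw [hkStepG_eq_piecewiseLinear k ℳ I d n₀ p n hp]
  exact piecewiseLinear_eq_zero fun a ha => hkStepSeq_eq_zero k ℳ I d n₀ p n hN (hx.trans ha)

end StepFunction

theorem statement5_general
    (k : Type*) [Field k] (p : ℕ) [Fact p.Prime]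
    (R : Type*) [CommRing R] [IsDomain R] [Algebra k R]
    (𝒜 : ℕ → Submodule k R) [GradedAlgebra 𝒜]
    (h𝒜0 : 𝒜 0 ≤ Submodule.span k {1})
    (d : ℕ) (hd : 2 ≤ d) (hdim : ringKrullDim R = d)
    (I : Ideal R)
    (n₀ : ℕ)
    (M : Type*) [AddCommGroup M] [Module R M] [Module k M] [IsScalarTower k R M]
    (ℳ : ℕ → Submodule k M) [DirectSum.Decomposition ℳ] [SetLike.GradedSMul 𝒜 ℳ]
    -- `I` is generated by `s` homogeneous elements
    (s : ℕ) (gI : Fin s → R)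
    (hgI : I = Ideal.span (Set.range gI))
    -- `M` is generated by homogeneous elements of degrees at most `nν`
    (nν t : ℕ) (gM : Fin t → M) (hgMhom : ∀ i, ∃ e ≤ nν, gM i ∈ ℳ e)
    (hgM : Submodule.span R (Set.range gM) = ⊤)
    -- `R` is generated as a `k`-algebra by homogeneous elements of degrees at most `mμ`
    (mμ u : ℕ) (gR : Fin u → R) (hgRhom : ∀ i, ∃ e ≤ mμ, gR i ∈ 𝒜 e)
    (hgR : Algebra.adjoin k (Set.range gR) = ⊤)
    -- `J^l ⊆ I` for the irrelevant ideal `J`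
    (l : ℕ) (hl : (HomogeneousIdeal.irrelevant 𝒜).toIdeal ^ l ≤ I) :
    (∀ n, ContinuousOn (hkStepG k ℳ I d n₀ p n) (Set.Ici 0)) ∧
    (∃ mt : ℝ, 0 < mt ∧ ∀ n : ℕ, 1 ≤ n → ∀ x : ℝ, mt < x →
      hkStepG k ℳ I d n₀ p n x = 0 ∧ hkStep k ℳ I d n₀ p n x = 0) ∧
    (∀ n m : ℕ, nν + mμ * l * s * p ^ n ≤ m →
      ℳ m ≤ ((I.frobeniusPow (p ^ n)) • (⊤ : Submodule R M)).restrictScalars k) := by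
  subst hgI
  have hp : p ≠ 0 := (Fact.out : p.Prime).ne_zero
  have hR : ¬ Function.Surjective (algebraMap k R) := fun h => by
    have hdim0 := ringKrullDim_le_of_surjective _ h
    rw [hdim, ringKrullDim_eq_zero_of_field] at hdim0
    norm_cast at hdim0
    omega
  have hs : 0 < s := by
    refine Nat.pos_of_ne_zero fun hs => hR (algebraMap_surjective_of_forall_mem_grade_zero h𝒜0
      (forall_mem_grade_zero_of_irrelevant_eq_bot 𝒜 (eq_bot_iff.mpr fun y hy => ?_)))
    subst hs
    have hyl := hl (Ideal.pow_mem_pow hy l)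
    rw [Set.range_eq_empty, Ideal.span_empty, Ideal.mem_bot] at hyl
    exact eq_zero_of_pow_eq_zero hyl
  have hmμ : 0 < mμ := by
    refine Nat.pos_of_ne_zero fun hmμ => hR (algebraMap_surjective_of_forall_mem_grade_zero h𝒜0
      (forall_mem_grade_zero_of_adjoin_eq_top 𝒜 hgR fun i => ?_))
    obtain ⟨e, he, hgi⟩ := hgRhom i
    obtain rfl : e = 0 := by omega
    exact hgi
  have : Nonempty (Fin s) := Fin.pos_iff_nonempty.mp hs
  have hdeg : ∀ n m, nν + mμ * l * s * p ^ n ≤ m → ℳ m ≤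
      ((Ideal.span (Set.range gI)).frobeniusPow (p ^ n) • (⊤ : Submodule R M)).restrictScalars k :=
    fun n m hm => grade_le_smul_top 𝒜 ℳ (fun j hj => grade_le_frobeniusPow 𝒜 hmμ hgRhom hgR hl
      (p ^ n) (by rwa [Fintype.card_fin])) hgMhom hgM (by omega)
  refine ⟨fun n => (continuous_hkStepG k ℳ _ d n₀ p n hp).continuousOn,
    ⟨(nν + mμ * l * s + 1 : ℕ), by positivity, fun n _ x hx => ?_⟩, hdeg⟩
  have hfloor : nν + mμ * l * s * p ^ n ≤ ⌊x * (p ^ n : ℕ)⌋₊ := by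
    have hq : 1 ≤ p ^ n := Nat.one_le_pow _ _ (Nat.pos_of_ne_zero hp)
    have hnat : nν + mμ * l * s * p ^ n ≤ (nν + mμ * l * s + 1) * p ^ n := by nlinarith
    refine Nat.le_floor ?_
    calc ((nν + mμ * l * s * p ^ n : ℕ) : ℝ)
        ≤ ((nν + mμ * l * s + 1 : ℕ) : ℝ) * (p ^ n : ℕ) := by exact_mod_cast hnat
      _ ≤ x * (p ^ n : ℕ) := by gcongr
  exact ⟨hkStepG_eq_zero k ℳ _ d n₀ p n hp (hdeg n) hfloor,
    hkStep_eq_zero k ℳ _ d n₀ p n (hdeg n) hfloor⟩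

/-- (Lemma 2.3 of the paper.)  Each `g_n(M_R, I)` is a compactly
supported continuous function, with a support bound independent of `n`; more precisely
`(M/I^{[q]}M)_m = 0` for all `m ≥ n_ν + m_μ·l·s·q`. -/
theorem statement5
    (k : Type*) [Field k] [PerfectField k] (p : ℕ) [Fact p.Prime] [CharP k p]
    (R : Type*) [CommRing R] [IsDomain R] [IsNoetherianRing R] [Algebra k R]
    [Algebra.FiniteType k R]
    (𝒜 : ℕ → Submodule k R) [GradedAlgebra 𝒜]
    (h𝒜0 : 𝒜 0 ≤ Submodule.span k {1})
    (d : ℕ) (hd : 2 ≤ d) (hdim : ringKrullDim R = d)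
    (I : Ideal R) (hI : I.IsHomogeneous 𝒜) (hIcolen : FiniteDimensional k (R ⧸ I))
    (n₀ : ℕ) (hn₀pos : 0 < n₀)
    (hn₀dvd : ∀ m, 0 < m → 𝒜 m ≠ ⊥ → n₀ ∣ m)
    (hn₀gcd : ∀ c : ℕ, (∀ m, 0 < m → 𝒜 m ≠ ⊥ → c ∣ m) → c ∣ n₀)
    (M : Type*) [AddCommGroup M] [Module R M] [Module k M] [IsScalarTower k R M]
    [Module.Finite R M]
    (ℳ : ℕ → Submodule k M) [DirectSum.Decomposition ℳ] [SetLike.GradedSMul 𝒜 ℳ]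
    -- `I` is generated by `s` homogeneous elements
    (s : ℕ) (gI : Fin s → R) (hgIhom : ∀ i, ∃ e : ℕ, gI i ∈ 𝒜 e)
    (hgI : I = Ideal.span (Set.range gI))
    -- `M` is generated by homogeneous elements of degrees at most `nν`
    (nν t : ℕ) (gM : Fin t → M) (hgMhom : ∀ i, ∃ e ≤ nν, gM i ∈ ℳ e)
    (hgM : Submodule.span R (Set.range gM) = ⊤)
    -- `R` is generated as a `k`-algebra by homogeneous elements of degrees at most `mμ`
    (mμ u : ℕ) (gR : Fin u → R) (hgRhom : ∀ i, ∃ e ≤ mμ, gR i ∈ 𝒜 e)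
    (hgR : Algebra.adjoin k (Set.range gR) = ⊤)
    -- `J^l ⊆ I` for the irrelevant ideal `J`
    (l : ℕ) (hl : (HomogeneousIdeal.irrelevant 𝒜).toIdeal ^ l ≤ I) :
    (∀ n, ContinuousOn (hkStepG k ℳ I d n₀ p n) (Set.Ici 0)) ∧
    (∃ mt : ℝ, 0 < mt ∧ ∀ n : ℕ, 1 ≤ n → ∀ x : ℝ, mt < x →
      hkStepG k ℳ I d n₀ p n x = 0 ∧ hkStep k ℳ I d n₀ p n x = 0) ∧
    (∀ n m : ℕ, nν + mμ * l * s * p ^ n ≤ m →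
      ℳ m ≤ ((I.frobeniusPow (p ^ n)) • (⊤ : Submodule R M)).restrictScalars k) :=
  statement5_general k p R 𝒜 h𝒜0 d hd hdim I n₀ M ℳ s gI hgI nν t gM hgMhom hgM mμ u gR hgRhom hgR l
    hl
end
end

section
/- Let R = ⊕_{n≥0} R_n be a Noetherian ℕ-graded integral domain with R_0 a field, and let n₀ be a positive integer. The following are equivalent: (1) gcd{n > 0 : R_n ≠ 0} = n₀; (2) n₀ is the least positive integer with the property that there exists m₁ > 0 such that R_{m·n₀} ≠ 0 for all m ≥ m₁; (3) n₀ is the least positive integer such that the quotient field of R contains a nonzero homogeneous element of degree n₀. -/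
noncomputable section


-- key auxiliary lemma
theorem aux_key
    (k : Type*) [Field k]
    (R : Type*) [CommRing R] [IsDomain R] [Algebra k R]
    (𝒜 : ℕ → Submodule k R) [GradedAlgebra 𝒜]
    (hS : ∃ n, 0 < n ∧ 𝒜 n ≠ ⊥) :
    ∃ d, 0 < d ∧ (∀ m, 0 < m → 𝒜 m ≠ ⊥ → d ∣ m) ∧
      (∀ c : ℕ, (∀ m, 0 < m → 𝒜 m ≠ ⊥ → c ∣ m) → c ∣ d) ∧
      ∃ N : ℕ, ∀ m, N ≤ m → 𝒜 (m * d) ≠ ⊥ := by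
  classical
  have A0 : 𝒜 0 ≠ ⊥ := by
    rw [Submodule.ne_bot_iff]
    exact ⟨1, SetLike.one_mem_graded 𝒜, one_ne_zero⟩
  set A : AddSubmonoid ℕ :=
    { carrier := {n | 𝒜 n ≠ ⊥}
      zero_mem' := A0
      add_mem' := by
        intro a b ha hb
        rw [Set.mem_setOf_eq, Submodule.ne_bot_iff] at ha hb ⊢
        obtain ⟨x, hx, hx0⟩ := ha
        obtain ⟨y, hy, hy0⟩ := hb
        exact ⟨x * y, SetLike.mul_mem_graded hx hy, mul_ne_zero hx0 hy0⟩ } with hA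
  have hAmem : ∀ n : ℕ, n ∈ A ↔ 𝒜 n ≠ ⊥ := fun n => Iff.rfl
  set G : AddSubgroup ℤ :=
    { carrier := {z | ∃ p q : ℕ, p ∈ A ∧ q ∈ A ∧ z = (p : ℤ) - q}
      zero_mem' := ⟨0, 0, A.zero_mem, A.zero_mem, by ring⟩
      add_mem' := by
        rintro x y ⟨p, q, hp, hq, rfl⟩ ⟨p', q', hp', hq', rfl⟩
        exact ⟨p + p', q + q', A.add_mem hp hp', A.add_mem hq hq', by push_cast; ring⟩
      neg_mem' := by
        rintro x ⟨p, q, hp, hq, rfl⟩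
        exact ⟨q, p, hq, hp, by ring⟩ } with hG
  obtain ⟨g, hg⟩ := Int.subgroup_cyclic G
  have hGmem : ∀ z : ℤ, z ∈ G ↔ g ∣ z := by
    intro z
    rw [hg, AddSubgroup.mem_closure_singleton]
    constructor
    · rintro ⟨n, rfl⟩; exact ⟨n, by rw [smul_eq_mul, mul_comm]⟩
    · rintro ⟨n, rfl⟩; exact ⟨n, by rw [smul_eq_mul, mul_comm]⟩
  have hAG : ∀ n : ℕ, n ∈ A → (n : ℤ) ∈ G := fun n hn =>
    ⟨n, 0, hn, A.zero_mem, by simp⟩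
  set d : ℕ := g.natAbs with hd
  -- d divides every element of A
  have hdvdA : ∀ n : ℕ, n ∈ A → d ∣ n := by
    intro n hn
    have := (hGmem _).mp (hAG n hn)
    have h2 : (d : ℤ) ∣ (n : ℤ) := Int.natAbs_dvd.mpr this
    exact_mod_cast h2
  have hdvd : ∀ m, 0 < m → 𝒜 m ≠ ⊥ → d ∣ m := fun m _ hm => hdvdA m hm
  -- d > 0
  obtain ⟨s, hs0, hsA⟩ := hS
  have hd0 : 0 < d := by
    rcases Nat.eq_zero_or_pos d with h | h
    · exfalso
      have := hdvdA s hsA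
      rw [h] at this
      omega
    · exact h
  -- maximality
  have hgcd : ∀ c : ℕ, (∀ m, 0 < m → 𝒜 m ≠ ⊥ → c ∣ m) → c ∣ d := by
    intro c hc
    have hcA : ∀ n : ℕ, n ∈ A → c ∣ n := by
      intro n hn
      rcases Nat.eq_zero_or_pos n with h | h
      · simp [h]
      · exact hc n h hn
    have hgG : g ∈ G := by rw [hg]; exact AddSubgroup.mem_closure_singleton.mpr ⟨1, one_smul _ _⟩
    obtain ⟨p, q, hp, hq, hpq⟩ := hgG
    have h1 : (c : ℤ) ∣ g := by
      rw [hpq]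
      exact dvd_sub (Int.natCast_dvd_natCast.mpr (hcA p hp)) (Int.natCast_dvd_natCast.mpr (hcA q hq))
    have h2 : (c : ℤ) ∣ (d : ℤ) := Int.dvd_natAbs.mpr h1
    exact_mod_cast h2
  -- get p = q + d with p, q ∈ A
  have hdG : (d : ℤ) ∈ G := by
    rw [hGmem]
    exact Int.dvd_natAbs.mpr dvd_rfl
  obtain ⟨p, q, hpA, hqA, hpq⟩ := hdG
  have hpq' : p = q + d := by omega
  -- eventual multiples
  obtain ⟨e, he⟩ := hdvdA q hqA
  refine ⟨d, hd0, hdvd, hgcd, ?_⟩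
  rcases Nat.eq_zero_or_pos e with he0 | he0
  · -- q = 0, so d = p ∈ A
    have hq0 : q = 0 := by rw [he, he0, mul_zero]
    have hpd : p = d := by omega
    refine ⟨1, fun m hm => ?_⟩
    obtain ⟨m', rfl⟩ : ∃ m', m = m' + 1 := ⟨m - 1, by omega⟩
    have heq2 : (m' + 1) * d = m' • p + d := by
      rw [smul_eq_mul, hpd]; ring
    rw [← hAmem, heq2]
    exact A.add_mem (A.nsmul_mem hpA _) (hpd ▸ hpA)
  · refine ⟨e * e, fun m hm => ?_⟩
    set t := m / e with ht
    set r := m % e with hr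
    have hrm : e * t + r = m := Nat.div_add_mod m e
    have hre : r < e := Nat.mod_lt _ he0
    have hte : e ≤ t := by
      rw [ht, Nat.le_div_iff_mul_le he0]
      nlinarith
    have htr : r ≤ t := by omega
    obtain ⟨u, hu⟩ : ∃ u, t = r + u := ⟨t - r, by omega⟩
    have hmem := A.add_mem (A.nsmul_mem hqA u) (A.nsmul_mem hpA r)
    have heq : u • q + r • p = m * d := by
      rw [smul_eq_mul, smul_eq_mul, hpq', he, ← hrm, hu]
      ring
    rw [← hAmem, ← heq]
    exact hmem

/-- For a Noetherian ℕ-graded domain `R` with `R₀` a field and a positive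
integer `n₀`, the following are equivalent: (1) `gcd {n > 0 | R_n ≠ 0} = n₀`; (2) `n₀` is
the least positive integer such that `R_{m n₀} ≠ 0` for all large `m`; (3) `n₀` is the
least positive integer arising as the degree of a nonzero homogeneous element of the
quotient field of `R` (i.e. a quotient `a/b` of nonzero homogeneous elements of `R` with
`deg a = deg b + n₀`). -/
theorem statement6
    (k : Type*) [Field k]
    (R : Type*) [CommRing R] [IsDomain R] [IsNoetherianRing R] [Algebra k R]
    (𝒜 : ℕ → Submodule k R) [GradedAlgebra 𝒜]
    (h𝒜0 : 𝒜 0 ≤ Submodule.span k {1})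
    (n₀ : ℕ) (hn₀ : 0 < n₀) :
    (((∀ m, 0 < m → 𝒜 m ≠ ⊥ → n₀ ∣ m) ∧
        (∀ c : ℕ, (∀ m, 0 < m → 𝒜 m ≠ ⊥ → c ∣ m) → c ∣ n₀))
      ↔ IsLeast {n : ℕ | 0 < n ∧ ∃ m₁ : ℕ, 0 < m₁ ∧ ∀ m, m₁ ≤ m → 𝒜 (m * n) ≠ ⊥} n₀) ∧
    (IsLeast {n : ℕ | 0 < n ∧ ∃ m₁ : ℕ, 0 < m₁ ∧ ∀ m, m₁ ≤ m → 𝒜 (m * n) ≠ ⊥} n₀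
      ↔ IsLeast {n : ℕ | 0 < n ∧ ∃ a b : R, a ≠ 0 ∧ b ≠ 0 ∧
          ∃ da db : ℕ, a ∈ 𝒜 da ∧ b ∈ 𝒜 db ∧ da = db + n} n₀) := by
  classical
  set S2 : Set ℕ := {n : ℕ | 0 < n ∧ ∃ m₁ : ℕ, 0 < m₁ ∧ ∀ m, m₁ ≤ m → 𝒜 (m * n) ≠ ⊥} with hS2
  set S3 : Set ℕ := {n : ℕ | 0 < n ∧ ∃ a b : R, a ≠ 0 ∧ b ≠ 0 ∧
      ∃ da db : ℕ, a ∈ 𝒜 da ∧ b ∈ 𝒜 db ∧ da = db + n} with hS3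
  by_cases hS : ∃ n, 0 < n ∧ 𝒜 n ≠ ⊥
  · obtain ⟨d, hd0, hdvd, hgcd, N, hN⟩ := aux_key k R 𝒜 hS
    have hdvd' : ∀ m, 𝒜 m ≠ ⊥ → d ∣ m := by
      intro m hm
      rcases Nat.eq_zero_or_pos m with h | h
      · simp [h]
      · exact hdvd m h hm
    -- characterization of S2
    have hS2c : ∀ n, n ∈ S2 ↔ 0 < n ∧ d ∣ n := by
      intro n
      constructor
      · rintro ⟨hn, m₁, hm₁, h⟩
        have h1 : d ∣ m₁ * n := hdvd _ (by positivity) (h m₁ le_rfl)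
        have h2 : d ∣ (m₁ + 1) * n := hdvd _ (by positivity) (h (m₁ + 1) (by omega))
        have h3 : d ∣ (m₁ + 1) * n - m₁ * n := Nat.dvd_sub h2 h1
        have h4 : (m₁ + 1) * n - m₁ * n = n := by
          have : (m₁ + 1) * n = m₁ * n + n := by ring
          omega
        exact ⟨hn, h4 ▸ h3⟩
      · rintro ⟨hn, j, hj⟩
        have hj1 : 1 ≤ j := by
          rcases Nat.eq_zero_or_pos j with h | h
          · rw [h, mul_zero] at hj; omega
          · exact h
        refine ⟨hn, N + 1, by omega, fun m hm => ?_⟩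
        have : m * n = (m * j) * d := by rw [hj]; ring
        rw [this]
        exact hN (m * j) (by nlinarith)
    -- characterization of S3
    have hS3c : ∀ n, n ∈ S3 ↔ 0 < n ∧ d ∣ n := by
      intro n
      constructor
      · rintro ⟨hn, a, b, ha, hb, da, db, hda, hdb, he⟩
        have h1 : d ∣ da := hdvd' da (Submodule.ne_bot_iff _ |>.mpr ⟨a, hda, ha⟩)
        have h2 : d ∣ db := hdvd' db (Submodule.ne_bot_iff _ |>.mpr ⟨b, hdb, hb⟩)
        refine ⟨hn, ?_⟩
        rw [he] at h1
        exact (Nat.dvd_add_right h2).mp h1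
      · rintro ⟨hn, j, hj⟩
        have hda : 𝒜 ((N + j) * d) ≠ ⊥ := hN _ (by omega)
        have hdb : 𝒜 (N * d) ≠ ⊥ := hN _ le_rfl
        obtain ⟨a, haM, ha0⟩ := (Submodule.ne_bot_iff _).mp hda
        obtain ⟨b, hbM, hb0⟩ := (Submodule.ne_bot_iff _).mp hdb
        exact ⟨hn, a, b, ha0, hb0, (N + j) * d, N * d, haM, hbM, by rw [hj]; ring⟩
    have hL2 : IsLeast S2 d := by
      constructor
      · exact (hS2c d).mpr ⟨hd0, dvd_rfl⟩
      · intro n hn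
        obtain ⟨hn0, hdn⟩ := (hS2c n).mp hn
        exact Nat.le_of_dvd hn0 hdn
    have hL3 : IsLeast S3 d := by
      constructor
      · exact (hS3c d).mpr ⟨hd0, dvd_rfl⟩
      · intro n hn
        obtain ⟨hn0, hdn⟩ := (hS3c n).mp hn
        exact Nat.le_of_dvd hn0 hdn
    constructor
    · constructor
      · rintro ⟨h1, h2⟩
        have e1 : n₀ ∣ d := hgcd n₀ h1
        have e2 : d ∣ n₀ := h2 d hdvd
        have : n₀ = d := Nat.dvd_antisymm e1 e2
        rw [this]
        exact hL2
      · intro h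
        have : n₀ = d := h.unique hL2
        rw [this]
        exact ⟨hdvd, hgcd⟩
    · constructor
      · intro h
        have : n₀ = d := h.unique hL2
        rw [this]; exact hL3
      · intro h
        have : n₀ = d := h.unique hL3
        rw [this]; exact hL2
  · push_neg at hS
    have hS' : ∀ n, 0 < n → 𝒜 n = ⊥ := hS
    have hP1 : ¬ ((∀ m, 0 < m → 𝒜 m ≠ ⊥ → n₀ ∣ m) ∧
        (∀ c : ℕ, (∀ m, 0 < m → 𝒜 m ≠ ⊥ → c ∣ m) → c ∣ n₀)) := by
      rintro ⟨_, h2⟩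
      have := h2 (n₀ + n₀) (fun m hm hne => absurd (hS' m hm) hne)
      have := Nat.le_of_dvd hn₀ this
      omega
    have hP2 : n₀ ∉ S2 := by
      rintro ⟨hn, m₁, hm₁, h⟩
      exact h m₁ le_rfl (hS' (m₁ * n₀) (by positivity))
    have hP3 : n₀ ∉ S3 := by
      rintro ⟨hn, a, b, ha, hb, da, db, hda, hdb, he⟩
      have hda0 : da = 0 := by
        by_contra h
        have := hS' da (by omega)
        rw [this] at hda
        exact ha (Submodule.mem_bot k |>.mp hda)
      have hdb0 : db = 0 := by
        by_contra h
        have := hS' db (by omega)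
        rw [this] at hdb
        exact hb (Submodule.mem_bot k |>.mp hdb)
      omega
    exact ⟨⟨fun h => absurd h hP1, fun h => absurd h.1 hP2⟩,
      ⟨fun h => absurd h.1 hP2, fun h => absurd h.1 hP3⟩⟩
end
end

section
/- Let R = ⊕_{n≥0} R_n be an ℕ-graded integral domain generated as an algebra over the field R_0 by homogeneous elements h_1, …, h_μ of positive degrees m_1, …, m_μ respectively. Let l₁ = lcm(m_1, …, m_μ) and r = l₁·μ. Then the Veronese subring R^{(r)} = ⊕_{m≥0} R_{rm}, graded with degree-m component R_{rm}, is a standard graded ring, i.e., it is generated as an R_0-algebra by its degree-1 component R_r. -/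
noncomputable section

open Finset in
lemma extract_aux {μ : ℕ} (m : Fin μ → ℕ) (hpos : ∀ i, 0 < m i) :
    ∀ (j s : ℕ) (a : Fin μ → ℕ),
      (∑ i, a i * m i) = (Finset.univ.lcm m) * s → μ - 1 + j ≤ s →
      ∃ b : Fin μ → ℕ, (∀ i, b i ≤ a i) ∧ (∑ i, b i * m i) = (Finset.univ.lcm m) * j := by
  set l := Finset.univ.lcm m with hl
  have hl0 : l ≠ 0 := by
    intro h0
    rcases Finset.lcm_eq_zero_iff.mp h0 with ⟨i, -, hi⟩
    exact (hpos i).ne' hi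
  intro j
  induction j with
  | zero => exact fun s a _ _ => ⟨0, fun i => Nat.zero_le _, by simp⟩
  | succ j ih =>
    intro s a hsum hs
    -- find an index with a i * m i ≥ l
    have hμ : 0 < μ := by
      rcases Nat.eq_zero_or_pos μ with h0 | h0
      · subst h0
        simp only [Finset.univ_eq_empty, Finset.sum_empty] at hsum
        rcases Nat.mul_eq_zero.mp hsum.symm with h1 | h1
        · exact absurd h1 hl0
        · omega
      · exact h0
    have hexists : ∃ i : Fin μ, l ≤ a i * m i := by
      by_contra hc
      push_neg at hc
      have hle : ∑ i, a i * m i ≤ ∑ _i : Fin μ, (l - 1) :=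
        Finset.sum_le_sum fun i _ => by have := hc i; omega
      simp only [Finset.sum_const, Finset.card_univ, Fintype.card_fin, smul_eq_mul] at hle
      rw [hsum] at hle
      have hμs : μ ≤ s := by omega
      have e1 : μ * (l - 1) + μ = μ * l := by
        rw [← Nat.mul_succ]
        congr 1
        have := Nat.one_le_iff_ne_zero.mpr hl0
        omega
      have e2 : μ * l ≤ s * l := Nat.mul_le_mul_right l hμs
      have e3 : s * l = l * s := Nat.mul_comm s l
      linarith
    obtain ⟨i0, hi0⟩ := hexists
    have hdvd : m i0 ∣ l := Finset.dvd_lcm (Finset.mem_univ i0)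
    set c := l / m i0 with hc
    have hcm : c * m i0 = l := Nat.div_mul_cancel hdvd
    have hca : c ≤ a i0 := by
      have := Nat.div_le_div_right (c := m i0) hi0
      rwa [Nat.mul_div_cancel _ (hpos i0)] at this
    have key : ∀ (f : Fin μ → ℕ), ∑ i, f i * m i
        = f i0 * m i0 + ∑ i ∈ Finset.univ.erase i0, f i * m i := by
      intro f
      exact (Finset.add_sum_erase _ _ (Finset.mem_univ i0)).symm
    set a' := Function.update a i0 (a i0 - c) with ha'
    have ha'sum : ∑ i, a' i * m i = l * (s - 1) := by
      rw [key a'] at *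
      have h1 : ∑ i ∈ Finset.univ.erase i0, a' i * m i
          = ∑ i ∈ Finset.univ.erase i0, a i * m i := by
        refine Finset.sum_congr rfl fun i hi => ?_
        rw [ha', Function.update_of_ne (Finset.ne_of_mem_erase hi)]
      rw [h1, ha', Function.update_self]
      rw [key a] at hsum
      have hs1 : 1 ≤ s := by omega
      have : (a i0 - c) * m i0 = a i0 * m i0 - l := by
        rw [Nat.sub_mul, hcm]
      rw [this]
      have hlsum : l ≤ a i0 * m i0 := hi0
      have e4 : l * (s - 1) + l = l * s := by
        rw [← Nat.mul_succ]
        congr 1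
        omega
      omega
    obtain ⟨b', hb'le, hb'sum⟩ := ih (s - 1) a' ha'sum (by omega)
    refine ⟨Function.update b' i0 (b' i0 + c), fun i => ?_, ?_⟩
    · by_cases hii : i = i0
      · subst hii
        rw [Function.update_self]
        have := hb'le i
        rw [ha', Function.update_self] at this
        omega
      · rw [Function.update_of_ne hii]
        have := hb'le i
        rwa [ha', Function.update_of_ne hii] at this
    · rw [key]
      rw [key b'] at hb'sum
      have h1 : ∑ i ∈ Finset.univ.erase i0, Function.update b' i0 (b' i0 + c) i * m i
          = ∑ i ∈ Finset.univ.erase i0, b' i * m i := by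
        refine Finset.sum_congr rfl fun i hi => ?_
        rw [Function.update_of_ne (Finset.ne_of_mem_erase hi)]
      rw [h1, Function.update_self, add_mul, hcm]
      have e5 : l * (j + 1) = l * j + l := by ring
      omega


/-- Let `R` be an ℕ-graded domain generated over the field `R₀ = k` by
homogeneous elements `h₁, …, h_μ` of positive degrees `m₁, …, m_μ`, let
`l₁ = lcm (m₁, …, m_μ)` and `r = l₁ · μ`.  Then the Veronese subring `R^{(r)}` is
standard graded, i.e. `R_{rn} = (R_r)ⁿ` for all `n ≥ 1`. -/
theorem statement7
    (k : Type*) [Field k]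
    (R : Type*) [CommRing R] [IsDomain R] [Algebra k R]
    (𝒜 : ℕ → Submodule k R) [GradedAlgebra 𝒜]
    (h𝒜0 : 𝒜 0 ≤ Submodule.span k {1})
    (μ : ℕ) (h : Fin μ → R) (m : Fin μ → ℕ)
    (hpos : ∀ i, 0 < m i) (hhom : ∀ i, h i ∈ 𝒜 (m i))
    (hgen : Algebra.adjoin k (Set.range h) = ⊤) :
    ∀ n : ℕ, 0 < n →
      𝒜 ((Finset.univ.lcm m * μ) * n) = (𝒜 (Finset.univ.lcm m * μ)) ^ n := by
  set l := Finset.univ.lcm m with hl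
  set r := l * μ with hr
  -- every monomial is homogeneous of the expected degree
  have hmono : ∀ a : Fin μ → ℕ, (∏ i, h i ^ a i) ∈ 𝒜 (∑ i, a i * m i) := by
    intro a
    have := SetLike.prod_pow_mem_graded 𝒜 m h a (F := Finset.univ) (fun i _ => hhom i)
    simpa [smul_eq_mul] using this
  -- monomials of degree r*n lie in (𝒜 r)^n
  have hmpow : ∀ n : ℕ, 0 < n → ∀ a : Fin μ → ℕ, (∑ i, a i * m i) = r * n →
      (∏ i, h i ^ a i) ∈ (𝒜 r) ^ n := by
    intro n
    induction n with
    | zero => omega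
    | succ n ih =>
      intro _ a hsum
      rcases Nat.eq_zero_or_pos n with h0 | h0
      · subst h0
        rw [pow_one]
        have : r * (0 + 1) = r := by ring
        rw [this] at hsum
        exact hsum ▸ hmono a
      · obtain ⟨b, hble, hbsum⟩ := extract_aux m hpos μ (μ * (n + 1)) a
          (by rw [hsum, ← hl]; ring)
          (by
            have h2 : μ * 2 ≤ μ * (n + 1) := Nat.mul_le_mul_left μ (by omega)
            omega)
      -- split the monomial
        have hsplit : (∏ i, h i ^ a i) = (∏ i, h i ^ b i) * ∏ i, h i ^ (a i - b i) := by
          rw [← Finset.prod_mul_distrib]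
          refine Finset.prod_congr rfl fun i _ => ?_
          rw [← pow_add]
          congr 1
          have := hble i
          omega
        have hadd : (∑ i, b i * m i) + ∑ i, (a i - b i) * m i = ∑ i, a i * m i := by
          rw [← Finset.sum_add_distrib]
          refine Finset.sum_congr rfl fun i _ => ?_
          rw [← add_mul]
          congr 1
          have := hble i
          omega
        rw [hsplit, pow_succ']
        refine Submodule.mul_mem_mul (show _ ∈ 𝒜 r from ?_) (ih h0 _ ?_)
        · have : (∑ i, b i * m i) = r := by rw [hbsum, ← hl, hr]
          exact this ▸ hmono b
        · have e : r * (n + 1) = r + r * n := by ring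
          have hb : (∑ i, b i * m i) = r := by rw [hbsum, ← hl, hr]
          omega
  -- each graded piece is spanned by the monomials of that degree
  have hspan : ∀ d : ℕ, 𝒜 d ≤ Submodule.span k
      {x | ∃ a : Fin μ → ℕ, (∑ i, a i * m i) = d ∧ x = ∏ i, h i ^ a i} := by
    intro d x hx
    have hMall : (⊤ : Submodule k R) ≤ Submodule.span k
        {x | ∃ a : Fin μ → ℕ, x = ∏ i, h i ^ a i} := by
      have h1 : Subalgebra.toSubmodule (Algebra.adjoin k (Set.range h))
          = Submodule.span k (Submonoid.closure (Set.range h)) := Algebra.adjoin_eq_span k _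
      rw [hgen] at h1
      have h2 : (Submonoid.closure (Set.range h) : Set R)
          ⊆ {x | ∃ a : Fin μ → ℕ, x = ∏ i, h i ^ a i} := by
        intro y hy
        induction hy using Submonoid.closure_induction with
        | mem z hz =>
          obtain ⟨i, rfl⟩ := hz
          refine ⟨fun j => if j = i then 1 else 0, ?_⟩
          rw [Finset.prod_eq_single i (fun j _ hj => by simp [hj]) (by simp)]
          simp
        | one => exact ⟨0, by simp⟩
        | mul z w _ _ hz hw =>
          obtain ⟨az, rfl⟩ := hz
          obtain ⟨aw, rfl⟩ := hw
          refine ⟨az + aw, ?_⟩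
          rw [← Finset.prod_mul_distrib]
          exact Finset.prod_congr rfl fun i _ => by rw [← pow_add]; rfl
      rw [Algebra.top_toSubmodule] at h1
      intro z _
      have hz : z ∈ Submodule.span k ((Submonoid.closure (Set.range h) : Set R)) := by
        rw [← h1]
        trivial
      exact Submodule.span_mono h2 hz
    have hxd : x = GradedAlgebra.proj 𝒜 d x := by
      rw [GradedAlgebra.proj_apply, DirectSum.decompose_of_mem_same 𝒜 hx]
    have hximg : x ∈ Submodule.map (GradedAlgebra.proj 𝒜 d)
        (Submodule.span k {x | ∃ a : Fin μ → ℕ, x = ∏ i, h i ^ a i}) :=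
      ⟨x, hMall Submodule.mem_top, hxd.symm⟩
    rw [Submodule.map_span] at hximg
    refine Submodule.span_le.mpr ?_ hximg
    rintro _ ⟨y, ⟨a, rfl⟩, rfl⟩
    by_cases hdeg : (∑ i, a i * m i) = d
    · have : GradedAlgebra.proj 𝒜 d (∏ i, h i ^ a i) = ∏ i, h i ^ a i := by
        rw [GradedAlgebra.proj_apply, DirectSum.decompose_of_mem_same 𝒜 (hdeg ▸ hmono a)]
      rw [this]
      exact Submodule.subset_span ⟨a, hdeg, rfl⟩
    · have : GradedAlgebra.proj 𝒜 d (∏ i, h i ^ a i) = 0 := by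
        rw [GradedAlgebra.proj_apply, DirectSum.decompose_of_mem_ne 𝒜 (hmono a) hdeg]
      rw [this]
      exact (Submodule.span k _).zero_mem
  intro n hn
  refine le_antisymm ?_ ?_
  · refine le_trans (hspan (r * n)) (Submodule.span_le.mpr ?_)
    rintro _ ⟨a, hd, rfl⟩
    exact hmpow n hn a hd
  · -- easy inclusion
    clear hn
    induction n with
    | zero =>
      simp only [pow_zero, Nat.mul_zero]
      exact Submodule.one_le.mpr SetLike.GradedOne.one_mem
    | succ n ih =>
      rcases Nat.eq_zero_or_pos n with h0 | h0
      · subst h0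
        rw [pow_one]
        have : r * (0 + 1) = r := by ring
        rw [this]
      · rw [pow_succ]
        refine Submodule.mul_le.mpr fun x hx y hy => ?_
        have hx' : x ∈ 𝒜 (r * n) := ih hx
        have := SetLike.mul_mem_graded hx' hy
        have e : r * n + r = r * (n + 1) := by ring
        exact e ▸ this
end
end

section
/- Let S be an ℕ-graded Noetherian integral domain, finitely generated as an algebra over the field S_0, with gcd{n > 0 : S_n ≠ 0} = 1, and let M be a finitely generated graded S-module of generic rank n₁ (i.e., dim_{Q(S)}(M ⊗_S Q(S)) = n₁ for the quotient field Q(S)). Then there exist an integer a > 0 and an exact sequence of graded S-modules 0 → S(−a)^{n₁} → M → Q'' → 0, in which the first map is an injective graded S-linear map of degree 0 and dim Q'' ≤ dim S − 1. -/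
/-!
Since the degrees of `S` have gcd `1`, `S` has nonzero homogeneous elements in every large
degree. Pick homogeneous `mᵢ ∈ M` whose images form a basis of `Q(S) ⊗ M` and multiply them by
nonzero homogeneous `sᵢ` so that every `sᵢ • mᵢ` has the same degree `a`. The map
`eᵢ ↦ sᵢ • mᵢ` is injective because it stays injective after tensoring with `Q(S)`, and its
cokernel vanishes after tensoring with `Q(S)`, so (being finitely generated) it is killed by a
nonzerodivisor, which lowers the Krull dimension by one.
-/

open scoped nonZeroDivisors
open Submodule

theorem exists_forall_ge_ne_bot_of_gcd_eq_one {k R : Type*} [Semiring k] [Semiring R]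
    [NoZeroDivisors R] [Nontrivial R] [Module k R]
    (𝒜 : ℕ → Submodule k R) [SetLike.GradedMonoid 𝒜]
    (hgcd : ∀ c : ℕ, (∀ m, 0 < m → 𝒜 m ≠ ⊥ → c ∣ m) → c = 1) :
    ∃ N, ∀ n ≥ N, 𝒜 n ≠ ⊥ := by
  set s : Set ℕ := {n | 𝒜 n ≠ ⊥}
  have hs : Nat.setGcd s = 1 := hgcd _ fun m _ hm ↦ Nat.setGcd_dvd_of_mem hm
  obtain ⟨N, hN⟩ := Nat.exists_mem_closure_of_ge (s := s)
  have hclosure : ∀ n ∈ AddSubmonoid.closure s, 𝒜 n ≠ ⊥ := fun n hn ↦ by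
    induction hn using AddSubmonoid.closure_induction with
    | mem n hn => exact hn
    | zero => exact (Submodule.ne_bot_iff _).mpr ⟨1, SetLike.one_mem_graded 𝒜, one_ne_zero⟩
    | add m n _ _ hm hn =>
      obtain ⟨x, hx, hx₀⟩ := Submodule.exists_mem_ne_zero_of_ne_bot hm
      obtain ⟨y, hy, hy₀⟩ := Submodule.exists_mem_ne_zero_of_ne_bot hn
      exact (Submodule.ne_bot_iff _).mpr
        ⟨x * y, SetLike.mul_mem_graded hx hy, mul_ne_zero hx₀ hy₀⟩
  exact ⟨N, fun n hn ↦ hclosure n (hN n hn (by simp [hs]))⟩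

theorem span_setOf_isHomogeneousElem_eq_top {k S M : Type*} [Semiring k] [Semiring S]
    [AddCommMonoid M] [Module S M] [Module k M] (ℳ : ℕ → Submodule k M)
    [DirectSum.Decomposition ℳ] :
    span S {x | SetLike.IsHomogeneousElem ℳ x} = ⊤ := by
  classical
  refine eq_top_iff'.mpr fun x ↦ ?_
  rw [← DirectSum.sum_support_decompose ℳ x]
  exact sum_mem fun i _ ↦ subset_span ⟨i, (DirectSum.decompose ℳ x i).2⟩

theorem linearCombination_mem_graded_add {k S M : Type*} [Semiring k] [CommSemiring S]
    [Module k S] [AddCommMonoid M] [Module S M] [Module k M]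
    (𝒜 : ℕ → Submodule k S) (ℳ : ℕ → Submodule k M) [SetLike.GradedSMul 𝒜 ℳ]
    {ι : Type*} [Fintype ι] {w : ι → M} {a : ℕ} (hw : ∀ i, w i ∈ ℳ a) {j : ℕ} {v : ι → S}
    (hv : ∀ i, v i ∈ 𝒜 j) :
    Fintype.linearCombination S w v ∈ ℳ (j + a) := by
  rw [Fintype.linearCombination_apply]
  exact sum_mem fun i _ ↦ SetLike.GradedSMul.smul_mem (hv i) (hw i)

section GenericRank

variable {S M N F : Type*} [CommRing S] [AddCommGroup M] [Module S M]
  [Field F] [Algebra S F] [IsFractionRing S F]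
  [AddCommGroup N] [Module S N] [Module F N] [IsScalarTower S F N]
  (f : M →ₗ[S] N) {ι : Type*}

theorem exists_basis_apply_eq_smul (B : Module.Basis ι F N) {m : ι → M}
    (hB : ∀ i, B i = f (m i)) {s : ι → S} (hs : ∀ i, s i ∈ S⁰) :
    ∃ B' : Module.Basis ι F N, ∀ i, B' i = f (s i • m i) :=
  ⟨B.unitsSMul fun i ↦ (IsLocalization.map_units F ⟨s i, hs i⟩).unit, fun i ↦ by
    simp [Module.Basis.unitsSMul_apply, hB, algebraMap_smul]⟩

theorem injective_linearCombination_of_basis_apply_eq [Fintype ι] (B : Module.Basis ι F N)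
    {w : ι → M} (hB : ∀ i, B i = f (w i)) :
    Function.Injective (Fintype.linearCombination S w) := by
  rw [← linearIndependent_iff_injective_fintypeLinearCombination]
  refine LinearIndependent.of_comp f ?_
  have hfw : f ∘ w = B := funext fun i ↦ (hB i).symm
  rw [hfw]
  exact B.linearIndependent.restrict_scalars' S

variable [IsLocalizedModule S⁰ f]

theorem span_image_eq_top_of_isLocalizedModule {H : Set M} (hH : span S H = ⊤) :
    span F (f '' H) = ⊤ := by
  rw [← localized'_span F S⁰ f, hH, localized'_top]

theorem exists_basis_apply_eq_of_span_eq_top [Module.Finite F N] {H : Set M}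
    (hH : span S H = ⊤) :
    ∃ (B : Module.Basis (Fin (Module.finrank F N)) F N) (m : Fin (Module.finrank F N) → M),
      (∀ i, m i ∈ H) ∧ ∀ i, B i = f (m i) := by
  obtain ⟨b, hbH, hb, hli⟩ := exists_linearIndependent F (f '' H)
  let B := Module.Basis.mk hli (by
    rw [Subtype.range_coe, hb, span_image_eq_top_of_isLocalizedModule f hH])
  have : Fintype b := FiniteDimensional.fintypeBasisIndex B
  let e := Fintype.equivFinOfCardEq (Module.finrank_eq_card_basis B).symm
  choose m hmH hm using fun x : b ↦ hbH x.2
  exact ⟨B.reindex e, fun i ↦ m (e.symm i), fun i ↦ hmH _, fun i ↦ by simp [B, hm]⟩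

theorem isTorsion_quotient_range_linearCombination [Fintype ι] (B : Module.Basis ι F N)
    {w : ι → M} (hB : ∀ i, B i = f (w i)) :
    Module.IsTorsion S (M ⧸ LinearMap.range (Fintype.linearCombination S w)) := by
  rintro ⟨y⟩
  have hspan : (span S (Set.range w)).localized' F S⁰ f = ⊤ := by
    rw [localized'_span, ← Set.range_comp, ← B.span_eq]
    congr
    exact funext fun i ↦ (hB i).symm
  obtain ⟨m, hm, s, hms⟩ := (mem_localized' F S⁰ f _ _).mp (hspan ▸ mem_top : f y ∈ _)
  rw [IsLocalizedModule.mk'_eq_iff, Submonoid.smul_def] at hms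
  obtain ⟨r, hr⟩ := (IsLocalizedModule.eq_zero_iff S⁰ f).mp
    (show f ((s : S) • y - m) = 0 by rw [map_sub, map_smul, hms, sub_self])
  have hrs : ((r * s : S⁰) : S) • y = (r : S) • m := by
    rw [Submonoid.coe_mul, mul_smul, ← sub_eq_zero, ← smul_sub, ← Submonoid.smul_def, hr]
  refine ⟨r * s, (Quotient.mk_eq_zero _).mpr ?_⟩
  change ((r * s : S⁰) : S) • y ∈ _
  rw [hrs, Fintype.range_linearCombination]
  exact smul_mem _ _ hm

end GenericRank

theorem ringKrullDim_quotient_annihilator_add_one_le {R M : Type*} [CommRing R]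
    [AddCommGroup M] [Module R M] [Module.Finite R M] (hM : Module.IsTorsion R M) :
    ringKrullDim (R ⧸ Module.annihilator R M) + 1 ≤ ringKrullDim R := by
  obtain ⟨r, hr, hr₀⟩ := Submodule.annihilator_top_inter_nonZeroDivisors hM
  rw [SetLike.mem_coe, Submodule.annihilator_top] at hr
  exact ringKrullDim_succ_le_of_surjective _ Ideal.Quotient.mk_surjective hr₀
    (Ideal.Quotient.eq_zero_iff_mem.mpr hr)

theorem statement12_general
    (k : Type*) [Field k]
    (S : Type*) [CommRing S] [IsDomain S] [Algebra k S]
    (𝒜 : ℕ → Submodule k S) [GradedAlgebra 𝒜]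
    (hgcd : ∀ c : ℕ, (∀ m, 0 < m → 𝒜 m ≠ ⊥ → c ∣ m) → c = 1)
    (M : Type*) [AddCommGroup M] [Module S M] [Module k M]
    [Module.Finite S M]
    (ℳ : ℕ → Submodule k M) [DirectSum.Decomposition ℳ] [SetLike.GradedSMul 𝒜 ℳ]
    (n₁ : ℕ)
    (hrank : Module.finrank (FractionRing S) (TensorProduct S (FractionRing S) M) = n₁) :
    ∃ a : ℕ, 0 < a ∧ ∃ α : (Fin n₁ → S) →ₗ[S] M,
      Function.Injective α ∧
      (∀ (j : ℕ) (v : Fin n₁ → S), (∀ i, v i ∈ 𝒜 j) → α v ∈ ℳ (j + a)) ∧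
      ringKrullDim (S ⧸ Module.annihilator S (M ⧸ LinearMap.range α)) + 1 ≤
        ringKrullDim S := by
  subst hrank
  obtain ⟨B, m, hm, hB⟩ := exists_basis_apply_eq_of_span_eq_top (F := FractionRing S)
    (TensorProduct.mk S (FractionRing S) M 1) (span_setOf_isHomogeneousElem_eq_top ℳ)
  choose d hd using hm
  obtain ⟨N, hN⟩ := exists_forall_ge_ne_bot_of_gcd_eq_one 𝒜 hgcd
  set a := N + Finset.univ.sup d + 1
  have hda : ∀ i, d i ≤ Finset.univ.sup d := fun i ↦ Finset.le_sup (Finset.mem_univ i)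
  choose s hs hs₀ using fun i ↦
    Submodule.exists_mem_ne_zero_of_ne_bot (hN (a - d i) (by have := hda i; omega))
  have hsm : ∀ i, s i • m i ∈ ℳ a := fun i ↦ by
    have hdeg : a - d i + d i = a := Nat.sub_add_cancel (by have := hda i; omega)
    exact hdeg ▸ SetLike.GradedSMul.smul_mem (hs i) (hd i)
  obtain ⟨B', hB'⟩ :=
    exists_basis_apply_eq_smul _ B hB fun i ↦ mem_nonZeroDivisors_of_ne_zero (hs₀ i)
  exact ⟨a, by omega, Fintype.linearCombination S fun i ↦ s i • m i,
    injective_linearCombination_of_basis_apply_eq _ B' hB',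
    fun _ _ hv ↦ linearCombination_mem_graded_add 𝒜 ℳ hsm hv,
    ringKrullDim_quotient_annihilator_add_one_le
      (isTorsion_quotient_range_linearCombination _ B' hB')⟩

/-- Let `S` be an ℕ-graded Noetherian domain, finitely generated over
the field `S₀`, with `gcd {n > 0 | S_n ≠ 0} = 1`, and let `M` be a finitely generated
graded `S`-module of generic rank `n₁`.  Then there are `a > 0` and an exact sequence of
graded `S`-modules `0 → S(−a)^{n₁} → M → Q'' → 0`, the first map being an injective
graded map of degree `0`, with `dim Q'' ≤ dim S − 1`. -/
theorem statement12
    (k : Type*) [Field k]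
    (S : Type*) [CommRing S] [IsDomain S] [IsNoetherianRing S] [Algebra k S]
    [Algebra.FiniteType k S]
    (𝒜 : ℕ → Submodule k S) [GradedAlgebra 𝒜]
    (h𝒜0 : 𝒜 0 ≤ Submodule.span k {1})
    (hgcd : ∀ c : ℕ, (∀ m, 0 < m → 𝒜 m ≠ ⊥ → c ∣ m) → c = 1)
    (M : Type*) [AddCommGroup M] [Module S M] [Module k M] [IsScalarTower k S M]
    [Module.Finite S M]
    (ℳ : ℕ → Submodule k M) [DirectSum.Decomposition ℳ] [SetLike.GradedSMul 𝒜 ℳ]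
    (n₁ : ℕ)
    (hrank : Module.finrank (FractionRing S) (TensorProduct S (FractionRing S) M) = n₁) :
    ∃ a : ℕ, 0 < a ∧ ∃ α : (Fin n₁ → S) →ₗ[S] M,
      Function.Injective α ∧
      (∀ (j : ℕ) (v : Fin n₁ → S), (∀ i, v i ∈ 𝒜 j) → α v ∈ ℳ (j + a)) ∧
      ringKrullDim (S ⧸ Module.annihilator S (M ⧸ LinearMap.range α)) + 1 ≤
        ringKrullDim S :=
  statement12_general k S 𝒜 hgcd M ℳ n₁ hrank
end
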